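/- Let A, B be n×n positive definite complex matrices and τ, ν ∈ (0,1) with ν ≤ min{τ,1-τ} or ν ≥ max{τ,1-τ}. Then (A + B A^{-1} B - (A#_{2τ}B + A#_{2-2τ}B))/(τ(1-τ)) ≤ (A + B A^{-1} B - (A#_{2ν}B + A#_{2-2ν}B))/(ν(1-ν)) in the Löwner order. -/

import Mathlib

open Matrix ComplexOrder

/-- Real power of a matrix, defined via the spectral decomposition when the
matrix is Hermitian (and junk value `0` otherwise). -/
noncomputable def mpow {n : ℕ} (A : Matrix (Fin n) (Fin n) ℂ) (t : ℝ) :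
    Matrix (Fin n) (Fin n) ℂ :=
  if hA : A.IsHermitian then
    (hA.eigenvectorUnitary : Matrix (Fin n) (Fin n) ℂ) *
      Matrix.diagonal (fun i => ((hA.eigenvalues i ^ t : ℝ) : ℂ)) *
      (star hA.eigenvectorUnitary : Matrix (Fin n) (Fin n) ℂ)
  else 0

/-- The weighted matrix geometric mean `A #_s B = A^{1/2} (A^{-1/2} B A^{-1/2})^s A^{1/2}`,
where the parameter `s` may exceed `1`. -/
noncomputable def geoMean {n : ℕ} (A B : Matrix (Fin n) (Fin n) ℂ) (s : ℝ) :
    Matrix (Fin n) (Fin n) ℂ :=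
  mpow A (1/2) * mpow (mpow A (-(1/2)) * B * mpow A (-(1/2))) s * mpow A (1/2)

/-!
Congruence by `A^{1/2}` turns the difference into `A^{1/2} (g_ν - g_τ)(C) A^{1/2}` with
`C = A^{-1/2} B A^{-1/2}` and `g_t(x) = (1 + x² - x^{2t} - x^{2-2t}) / (t(1-t))`, so it suffices
that `g_τ ≤ g_ν` on `(0, ∞)`. Writing `x = e^θ` and `s = 1 - 2t` gives
`g_t(x) = 8x (cosh θ - cosh sθ) / (1 - s²)`, and the hypothesis on `τ, ν` says
`(1 - 2τ)² ≤ (1 - 2ν)²`. Termwise in the power series of `cosh`,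
`(cosh θ - cosh sθ) / (1 - s²) = ∑ₘ (1 + s² + ⋯ + s^{2(m-1)}) θ^{2m} / (2m)!`
is increasing in `s²`.
-/

open Finset Real
open scoped Nat MatrixOrder

theorem one_sub_mul_one_sub_pow_le {x y : ℝ} (m : ℕ) (hx : 0 ≤ x) (hxy : x ≤ y)
    (hy : y ≤ 1) :
    (1 - y) * (1 - x ^ m) ≤ (1 - x) * (1 - y ^ m) := by
  rw [← mul_neg_geom_sum x, ← mul_neg_geom_sum y, mul_left_comm]
  have hsum : ∑ i ∈ range m, x ^ i ≤ ∑ i ∈ range m, y ^ i :=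
    sum_le_sum fun i _ => pow_le_pow_left₀ hx hxy i
  exact mul_le_mul_of_nonneg_left (mul_le_mul_of_nonneg_left hsum (by linarith)) (by linarith)

theorem one_sub_sq_mul_cosh_sub_cosh_le {s t : ℝ} (θ : ℝ) (hst : s ^ 2 ≤ t ^ 2)
    (ht : t ^ 2 ≤ 1) :
    (1 - t ^ 2) * (cosh θ - cosh (s * θ)) ≤ (1 - s ^ 2) * (cosh θ - cosh (t * θ)) := by
  have hasSum_cosh_sub_cosh (r : ℝ) :
      HasSum (fun m : ℕ => (1 - (r ^ 2) ^ m) * (θ ^ (2 * m) / (2 * m)!))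
        (cosh θ - cosh (r * θ)) := by
    refine ((hasSum_cosh θ).sub (hasSum_cosh (r * θ))).congr_fun fun m => ?_
    rw [mul_pow, pow_mul r]
    ring
  refine hasSum_le (fun m => ?_) ((hasSum_cosh_sub_cosh s).mul_left _)
    ((hasSum_cosh_sub_cosh t).mul_left _)
  rw [← mul_assoc, ← mul_assoc]
  exact mul_le_mul_of_nonneg_right (one_sub_mul_one_sub_pow_le m (sq_nonneg s) hst ht)
    (div_nonneg ((even_two_mul m).pow_nonneg θ) (Nat.cast_nonneg _))

theorem one_add_mul_self_sub_rpow_eq {x : ℝ} (hx : 0 < x) (t : ℝ) :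
    1 + x * x - (x ^ (2 * t) + x ^ (2 - 2 * t)) =
      2 * x * (cosh (log x) - cosh ((1 - 2 * t) * log x)) := by
  obtain ⟨θ, rfl⟩ : ∃ θ, x = exp θ := ⟨log x, (exp_log hx).symm⟩
  simp only [log_exp, cosh_eq, ← exp_mul]
  ring_nf
  simp only [← exp_add]
  ring_nf
  rw [exp_zero]
  ring

noncomputable def heinzGap (t x : ℝ) : ℝ :=
  (t * (1 - t))⁻¹ * (1 + x * x - (x ^ (2 * t) + x ^ (2 - 2 * t)))

theorem heinzGap_le_heinzGap {x : ℝ} (hx : 0 < x) {τ ν : ℝ} (hν : ν ∈ Set.Ioo 0 1)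
    (h : (1 - 2 * τ) ^ 2 ≤ (1 - 2 * ν) ^ 2) : heinzGap τ x ≤ heinzGap ν x := by
  have hνpos : 0 < ν * (1 - ν) := mul_pos hν.1 (sub_pos.2 hν.2)
  have hτpos : 0 < τ * (1 - τ) := by nlinarith
  have hcosh := one_sub_sq_mul_cosh_sub_cosh_le (log x) h (by nlinarith)
  rw [heinzGap, heinzGap, one_add_mul_self_sub_rpow_eq hx, one_add_mul_self_sub_rpow_eq hx,
    inv_mul_eq_div, inv_mul_eq_div, div_le_div_iff₀ hτpos hνpos]
  linear_combination (x / 2) * hcosh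

section mpow

variable {n : ℕ} {A B : Matrix (Fin n) (Fin n) ℂ}

theorem mpow_eq_cfc (hA : A.IsHermitian) (t : ℝ) : mpow A t = cfc (fun x : ℝ => x ^ t) A := by
  rw [hA.cfc_eq, mpow, dif_pos hA]
  rfl

theorem mpow_add (hA : A.PosDef) (s t : ℝ) : mpow A (s + t) = mpow A s * mpow A t := by
  rw [mpow_eq_cfc hA.1, mpow_eq_cfc hA.1, mpow_eq_cfc hA.1,
    ← cfc_mul _ _ _ (A.finite_real_spectrum.continuousOn _)
      (A.finite_real_spectrum.continuousOn _)]
  exact cfc_congr fun x hx => Real.rpow_add (hA.isStrictlyPositive.spectrum_pos hx) s t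

theorem mpow_zero (hA : A.IsHermitian) : mpow A 0 = 1 := by
  simp only [mpow_eq_cfc hA, Real.rpow_zero]
  exact cfc_const_one ℝ A

theorem mpow_one (hA : A.IsHermitian) : mpow A 1 = A := by
  simp only [mpow_eq_cfc hA, Real.rpow_one]
  exact cfc_id' ℝ A hA.isSelfAdjoint


theorem isHermitian_mpow (A : Matrix (Fin n) (Fin n) ℂ) (t : ℝ) : (mpow A t).IsHermitian := by
  by_cases hA : A.IsHermitian
  · rw [mpow_eq_cfc hA]
    exact cfc_predicate _ A
  · rw [mpow, dif_neg hA]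
    exact isHermitian_zero

theorem mpow_mul_mpow_neg (hA : A.PosDef) (t : ℝ) : mpow A t * mpow A (-t) = 1 := by
  rw [← mpow_add hA, add_neg_cancel, mpow_zero hA.1]

theorem mpow_neg_one (hA : A.PosDef) : mpow A (-1) = A⁻¹ := by
  refine (inv_eq_right_inv ?_).symm
  simpa only [mpow_one hA.1] using mpow_mul_mpow_neg hA 1

theorem smul_heinz_eq_conj_cfc_heinzGap (hA : A.PosDef) (hB : B.IsHermitian) (t : ℝ) :
    (t * (1 - t))⁻¹ • (A + B * A⁻¹ * B - (geoMean A B (2 * t) + geoMean A B (2 - 2 * t))) =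
      mpow A (1/2) * cfc (heinzGap t) (mpow A (-(1/2)) * B * mpow A (-(1/2))) * mpow A (1/2) := by
  set S := mpow A (1/2)
  set T := mpow A (-(1/2))
  set C := T * B * T
  have hST : S * T = 1 := mpow_mul_mpow_neg hA _
  have hTS : T * S = 1 := by simpa only [neg_neg] using mpow_mul_mpow_neg hA (-(1/2))
  have hC : C.IsHermitian := by
    have hC' := isHermitian_conjTranspose_mul_mul T hB
    rwa [(isHermitian_mpow A (-(1/2))).eq] at hC'
  have hA_eq : A = S * 1 * S := by
    rw [mul_one, ← mpow_add hA, add_halves, mpow_one hA.1]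
  have hBAB : B * A⁻¹ * B = S * (C * C) * S := by
    rw [← mpow_neg_one hA, show (-1 : ℝ) = -(1/2) + -(1/2) by norm_num, mpow_add hA]
    calc B * (T * T) * B = S * T * B * (T * T) * B * (T * S) := by rw [hST, hTS, one_mul, mul_one]
      _ = S * (C * C) * S := by simp only [C, mul_assoc]
  have hgeo (s : ℝ) : geoMean A B s = S * cfc (fun x : ℝ => x ^ s) C * S := by
    rw [geoMean, mpow_eq_cfc hC]
  have hcfc : cfc (heinzGap t) C = (t * (1 - t))⁻¹ • (1 + C * C -
      (cfc (fun x : ℝ => x ^ (2 * t)) C + cfc (fun x : ℝ => x ^ (2 - 2 * t)) C)) := by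
    unfold heinzGap
    simp (disch := exact C.finite_real_spectrum.continuousOn _) only [cfc_const_mul, cfc_sub,
      cfc_add, cfc_mul, cfc_const_one ℝ C, cfc_id' ℝ C hC.isSelfAdjoint]
  rw [hcfc, hBAB, hgeo, hgeo, hA_eq]
  simp only [← mul_add, ← add_mul, ← mul_sub, ← sub_mul, ← smul_mul_assoc]
  rw [smul_mul_assoc, mul_smul_comm]

theorem posDef_mpow_mul_mul_mpow (hA : A.PosDef) (hB : B.PosDef) (t : ℝ) :
    (mpow A t * B * mpow A t).PosDef := by
  have hunit : IsUnit (mpow A t) :=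
    ⟨⟨mpow A t, mpow A (-t), mpow_mul_mpow_neg hA t,
      by simpa only [neg_neg] using mpow_mul_mpow_neg hA (-t)⟩, rfl⟩
  have h := hB.conjTranspose_mul_mul_same (mulVec_injective_of_isUnit hunit)
  rwa [(isHermitian_mpow A t).eq] at h

end mpow

theorem loewner_quadratic_heinz_general {n : ℕ} (A B : Matrix (Fin n) (Fin n) ℂ)
    (hA : A.PosDef) (hB : B.PosDef)
    (τ ν : ℝ) (hν : ν ∈ Set.Ioo (0:ℝ) 1)
    (h : ν ≤ min τ (1 - τ) ∨ max τ (1 - τ) ≤ ν) :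
    ((ν * (1 - ν))⁻¹ • (A + B * A⁻¹ * B - (geoMean A B (2*ν) + geoMean A B (2 - 2*ν)))
      - (τ * (1 - τ))⁻¹ • (A + B * A⁻¹ * B - (geoMean A B (2*τ) + geoMean A B (2 - 2*τ)))
      ).PosSemidef := by
  have hsq : (1 - 2 * τ) ^ 2 ≤ (1 - 2 * ν) ^ 2 := by
    rcases h with h | h
    · nlinarith [min_le_left τ (1 - τ), min_le_right τ (1 - τ)]
    · nlinarith [le_max_left τ (1 - τ), le_max_right τ (1 - τ)]
  rw [smul_heinz_eq_conj_cfc_heinzGap hA hB.1, smul_heinz_eq_conj_cfc_heinzGap hA hB.1,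
    ← sub_mul, ← mul_sub]
  set C := mpow A (-(1/2)) * B * mpow A (-(1/2))
  have hC : C.PosDef := posDef_mpow_mul_mul_mpow hA hB _
  rw [← cfc_sub _ _ C (C.finite_real_spectrum.continuousOn _)
    (C.finite_real_spectrum.continuousOn _)]
  have hgap : 0 ≤ cfc (fun x => heinzGap ν x - heinzGap τ x) C :=
    cfc_nonneg fun x hx =>
      sub_nonneg.2 (heinzGap_le_heinzGap (hC.isStrictlyPositive.spectrum_pos hx) hν hsq)
  simpa only [(isHermitian_mpow A _).eq] using
    hgap.posSemidef.mul_mul_conjTranspose_same (mpow A (1/2))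

theorem loewner_quadratic_heinz {n : ℕ} (A B : Matrix (Fin n) (Fin n) ℂ)
    (hA : A.PosDef) (hB : B.PosDef)
    (τ ν : ℝ) (hτ : τ ∈ Set.Ioo (0:ℝ) 1) (hν : ν ∈ Set.Ioo (0:ℝ) 1)
    (h : ν ≤ min τ (1 - τ) ∨ max τ (1 - τ) ≤ ν) :
    ((ν * (1 - ν))⁻¹ • (A + B * A⁻¹ * B - (geoMean A B (2*ν) + geoMean A B (2 - 2*ν)))
      - (τ * (1 - τ))⁻¹ • (A + B * A⁻¹ * B - (geoMean A B (2*τ) + geoMean A B (2 - 2*τ)))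
      ).PosSemidef :=
  loewner_quadratic_heinz_general A B hA hB τ ν hν h
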